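/- If F = {fₙ} is a time varying bi-measurable map on a metric space, h : X → X a uniform equivalence, and μ a Borel measure persistent with respect to F, then h_*(μ) (defined by h_*(μ)(A) = μ(h(A))) is persistent with respect to F' = {h⁻¹∘fₙ∘h}. -/
import Mathlib


open MeasureTheory Metric Set Filter

variable {X : Type*}

/-- Forward compositions `F_n = f_n ∘ ⋯ ∘ f_1 ∘ f_0` for `n ≥ 0`. -/
def compF (f : ℕ → X ≃ X) : ℕ → X → X
  | 0 => f 0
  | n + 1 => (f (n + 1)) ∘ compF f n

/-- Backward compositions `F_{-n} = f_n⁻¹ ∘ ⋯ ∘ f_1⁻¹ ∘ f_0⁻¹`. -/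
def compB (f : ℕ → X ≃ X) : ℕ → X → X
  | 0 => (f 0).symm
  | n + 1 => ((f (n + 1)).symm : X → X) ∘ compB f n

/-- The time-`n` map `F_n` for `n : ℤ`. -/
def compZ (f : ℕ → X ≃ X) : ℤ → X → X
  | Int.ofNat n => compF f n
  | Int.negSucc n => compB f (n + 1)

/-- `F_{[a, a+r]} = f_{a+r} ∘ ⋯ ∘ f_a` as an equivalence. -/
def seg (f : ℕ → X ≃ X) (a : ℕ) : ℕ → X ≃ X
  | 0 => f a
  | r + 1 => (seg f a r).trans (f (a + r + 1))

/-- `F⁻¹_{[a, a+r]} = f_{a+r}⁻¹ ∘ ⋯ ∘ f_a⁻¹` as an equivalence. -/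
def segInv (f : ℕ → X ≃ X) (a : ℕ) : ℕ → X ≃ X
  | 0 => (f a).symm
  | r + 1 => (segInv f a r).trans (f (a + r + 1)).symm

/-- A time varying bi-measurable map: each `f n` and its inverse are measurable, `f 0 = id`. -/
def BiMeasurable [MeasurableSpace X] (f : ℕ → X ≃ X) : Prop :=
  (∀ n, Measurable (f n)) ∧ (∀ n, Measurable ((f n).symm : X → X)) ∧ f 0 = Equiv.refl X

/-- The dynamical ball `Γ_δ(x)`. -/
def Gamma [PseudoMetricSpace X] (f : ℕ → X ≃ X) (δ : ℝ) (x : X) : Set X :=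
  {y | ∀ n : ℤ, dist (compZ f n x) (compZ f n y) ≤ δ}

/-- `μ` is expansive w.r.t. `F`. -/
def IsExpansiveMeasure [PseudoMetricSpace X] [MeasurableSpace X] (μ : Measure X)
    (f : ℕ → X ≃ X) : Prop :=
  ∃ δ > 0, ∀ x : X, μ (Gamma f δ x) = 0

/-- `η(f,g) = sup_x min(d(f x, g x), 1)`. -/
noncomputable def eta [PseudoMetricSpace X] (f g : X → X) : ℝ :=
  ⨆ x, min (dist (f x) (g x)) 1

/-- The metric `p` on time varying maps. -/
noncomputable def pDist [PseudoMetricSpace X] (f g : ℕ → X ≃ X) : ℝ :=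
  max (⨆ n, eta (f n) (g n)) (⨆ n, eta ((f n).symm) ((g n).symm))

/-- The `k`-th power system `F^k`, with `g_n = F_{[(n-1)k+1, nk]}`. -/
def powerF (f : ℕ → X ≃ X) (k : ℕ) : ℕ → X ≃ X
  | 0 => Equiv.refl X
  | n + 1 => seg f (n * k + 1) (k - 1)

/-- Upper semicontinuity of a set valued map at the points of its domain. -/
def USCSetMap [PseudoMetricSpace X] (H : X → Set X) : Prop :=
  ∀ x : X, (H x).Nonempty → ∀ O : Set X, IsOpen O → H x ⊆ O →
    ∃ δ > 0, ∀ y : X, dist x y < δ → H y ⊆ O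

/-- `μ` is topologically stable w.r.t. `F`. -/
def TopStableMeasure [MetricSpace X] [MeasurableSpace X] (μ : Measure X)
    (f : ℕ → X ≃ X) : Prop :=
  ∀ ε > 0, ∃ δ : ℝ, 0 < δ ∧ δ < 1 ∧
    ∀ g : ℕ → X ≃ X, BiMeasurable g → pDist f g < δ →
      ∃ H : X → Set X,
        (∀ x, IsCompact (H x)) ∧ USCSetMap H ∧
        MeasurableSet {x : X | (H x).Nonempty} ∧
        μ {x : X | ¬ (H x).Nonempty} = 0 ∧
        (∀ x, μ (H x) = 0) ∧
        (∀ x, H x ⊆ ball x ε) ∧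
        (∀ x, ∀ n : ℤ, compZ f n '' H x ⊆ closedBall (compZ g n x) ε)

/-- `F` is topologically stable. -/
def TopStableMap [MetricSpace X] [MeasurableSpace X] (f : ℕ → X ≃ X) : Prop :=
  ∀ ε > 0, ∃ δ : ℝ, 0 < δ ∧ δ < 1 ∧
    ∀ g : ℕ → X ≃ X, BiMeasurable g → pDist f g < δ →
      ∃ h : X → X, Continuous h ∧
        ∀ x, dist (h x) x < ε ∧ ∀ n : ℤ, dist (compZ f n (h x)) (compZ g n x) < ε

/-- `μ` is persistent w.r.t. `F`. -/
def MeasurePersistent [MetricSpace X] [MeasurableSpace X] (μ : Measure X)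
    (f : ℕ → X ≃ X) : Prop :=
  ∀ ε > 0, ∃ δ : ℝ, 0 < δ ∧ δ < 1 ∧ ∃ B : Set X, MeasurableSet B ∧ μ (Set.univ \ B) = 0 ∧
    ∀ g : ℕ → X ≃ X, BiMeasurable g → pDist f g < δ →
      ∀ x ∈ B, ∃ y : X, ∀ n : ℤ, dist (compZ f n y) (compZ g n x) < ε

/-- A `δ`-pseudo orbit of `F`. -/
def IsPseudoOrbit [PseudoMetricSpace X] (f : ℕ → X ≃ X) (δ : ℝ) (x : ℤ → X) : Prop :=
  (∀ n : ℕ, dist (f (n + 1) (x n)) (x (n + 1)) < δ) ∧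
  (∀ n : ℕ, dist ((f (n + 1)).symm (x (-(n : ℤ)))) (x (-(n : ℤ) - 1)) < δ)

/-- `μ` has shadowing w.r.t. `F`. -/
def MeasureShadowing [PseudoMetricSpace X] [MeasurableSpace X] (μ : Measure X)
    (f : ℕ → X ≃ X) : Prop :=
  ∀ ε > 0, ∃ δ > 0, ∃ B : Set X, MeasurableSet B ∧ μ (Set.univ \ B) = 0 ∧
    ∀ x : ℤ → X, IsPseudoOrbit f δ x → x 0 ∈ B →
      ∃ y : X, ∀ n : ℤ, dist (compZ f n y) (x n) < ε

/-- The ω-limit set of `x` under `F`. -/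
def omegaLimitSet [PseudoMetricSpace X] (f : ℕ → X ≃ X) (x : X) : Set X :=
  {y | ∃ φ : ℕ → ℤ, StrictMono φ ∧
    Filter.Tendsto (fun k => dist (compZ f (φ k) x) y) Filter.atTop (nhds 0)}

/-- The α-limit set of `x` under `F`. -/
def alphaLimitSet [PseudoMetricSpace X] (f : ℕ → X ≃ X) (x : X) : Set X :=
  {y | ∃ φ : ℕ → ℤ, StrictAnti φ ∧
    Filter.Tendsto (fun k => dist (compZ f (φ k) x) y) Filter.atTop (nhds 0)}

/-- `A(F)`: points with converging semiorbits. -/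
def ConvSemiorbits [PseudoMetricSpace X] (f : ℕ → X ≃ X) : Set X :=
  {x | (∃ a, alphaLimitSet f x = {a}) ∧ (∃ b, omegaLimitSet f x = {b})}

/-- The set `A(x, y, n, m)`. -/
def ApproxSet [PseudoMetricSpace X] (f : ℕ → X ≃ X) (x y : X) (n m : ℕ) : Set X :=
  {z | ∀ i : ℕ, m ≤ i →
    max (dist (compZ f (-(i : ℤ)) z) x) (dist (compZ f (i : ℤ) z) y) ≤ 1 / (n : ℝ)}

/-- The non-wandering set `Ω(F)`. -/
def NonWandering [TopologicalSpace X] (f : ℕ → X ≃ X) : Set X :=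
  {x | ∀ U : Set X, IsOpen U → x ∈ U → ∀ n : ℕ, ∃ m : ℕ, n ≤ m ∧ ∃ r : ℕ,
    (((seg f m r : X → X) '' U) ∩ U).Nonempty ∨
      (((segInv f m r : X → X) '' U) ∩ U).Nonempty}

/-- A finite open cover `A` is a `μ`-generator for `F`. -/
def IsMuGenerator [MetricSpace X] [MeasurableSpace X] (μ : Measure X) (f : ℕ → X ≃ X)
    (A : Finset (Set X)) : Prop :=
  (∀ U ∈ A, IsOpen U) ∧ (⋃ U ∈ A, U) = Set.univ ∧
    ∀ B : ℤ → Set X, (∀ n, B n ∈ A) → μ (⋂ n : ℤ, compZ f n '' closure (B n)) = 0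


lemma conj_compF (e : X ≃ X) (g : ℕ → X ≃ X) (n : ℕ) (x : X) :
    compF (fun m => (e.symm.trans (g m)).trans e) n x = e (compF g n (e.symm x)) := by
  induction n with
  | zero => simp [compF]
  | succ n ih => simp [compF, ih]

lemma conj_compB (e : X ≃ X) (g : ℕ → X ≃ X) (n : ℕ) (x : X) :
    compB (fun m => (e.symm.trans (g m)).trans e) n x = e (compB g n (e.symm x)) := by
  induction n with
  | zero => simp [compB]
  | succ n ih => simp [compB, ih]

lemma conj_compZ (e : X ≃ X) (g : ℕ → X ≃ X) (n : ℤ) (x : X) :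
    compZ (fun m => (e.symm.trans (g m)).trans e) n x = e (compZ g n (e.symm x)) := by
  cases n with
  | ofNat n => exact conj_compF e g n x
  | negSucc n => exact conj_compB e g (n + 1) x

lemma le_eta [PseudoMetricSpace X] (f g : X → X) (x : X) :
    min (dist (f x) (g x)) 1 ≤ eta f g :=
  le_ciSup (f := fun x => min (dist (f x) (g x)) 1)
    ⟨1, by rintro _ ⟨x, rfl⟩; exact min_le_right _ _⟩ x

lemma eta_le_one [PseudoMetricSpace X] (f g : X → X) : eta f g ≤ 1 :=
  Real.iSup_le (fun x => min_le_right _ _) one_pos.le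

theorem persistent_measure_pushforward
    [MetricSpace X] [MeasurableSpace X] [BorelSpace X]
    (f : ℕ → X ≃ X) (hf : BiMeasurable f)
    (h : X ≃ X) (hUC : UniformContinuous (h : X → X))
    (hUC' : UniformContinuous (h.symm : X → X))
    (μ : Measure X) (hp : MeasurePersistent μ f) :
    MeasurePersistent (Measure.map (h.symm : X → X) μ)
      (fun n => (h.trans (f n)).trans h.symm) := by
  have hmh : Measurable (h : X → X) := hUC.continuous.measurable
  have hmh' : Measurable (h.symm : X → X) := hUC'.continuous.measurable
  intro ε hε
  obtain ⟨ε₁, hε₁, hε₁'⟩ := Metric.uniformContinuous_iff.mp hUC' ε hε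
  obtain ⟨δ, hδ0, hδ1, B, hBmeas, hBnull, hmain⟩ := hp ε₁ hε₁
  obtain ⟨δ₂, hδ₂, hδ₂'⟩ := Metric.uniformContinuous_iff.mp hUC (δ / 2) (by linarith)
  refine ⟨min δ₂ (1 / 2), by positivity,
    lt_of_le_of_lt (min_le_right _ _) (by norm_num), (h : X → X) ⁻¹' B,
    hBmeas.preimage hmh, ?_, ?_⟩
  · rw [Measure.map_apply hmh' (MeasurableSet.univ.diff (hBmeas.preimage hmh))]
    have : (h.symm : X → X) ⁻¹' (Set.univ \ (h : X → X) ⁻¹' B) = Set.univ \ B := by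
      ext a; simp
    rw [this]; exact hBnull
  · intro g hg hpd x hx
    set G : ℕ → X ≃ X := fun m => (h.symm.trans (g m)).trans h with hGdef
    have hGbi : BiMeasurable G := by
      refine ⟨fun m => hmh.comp ((hg.1 m).comp hmh'),
        fun m => hmh.comp ((hg.2.1 m).comp hmh'), ?_⟩
      ext z; simp [hGdef, hg.2.2]
    -- key distance extraction from pDist f' g < min δ₂ (1/2)
    have key : ∀ (a b : X), min (dist a b) 1 < min δ₂ (1 / 2) →
        dist (h a) (h b) < δ / 2 := by
      intro a b hab
      apply hδ₂'
      rcases le_or_gt (dist a b) 1 with hle | hgt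
      · have := lt_of_lt_of_le hab (min_le_left _ _)
        rwa [min_eq_left hle] at this
      · exfalso
        have := lt_of_lt_of_le hab (min_le_right _ _)
        rw [min_eq_right hgt.le] at this; linarith
    have hbdd : ∀ (F g' : ℕ → X → X), BddAbove (Set.range fun n => eta (F n) (g' n)) :=
      fun F g' => ⟨1, by rintro _ ⟨n, rfl⟩; exact eta_le_one _ _⟩
    have hpd1 : ∀ n x', min (dist (((h.trans (f n)).trans h.symm) x') (g n x')) 1
        < min δ₂ (1 / 2) := by
      intro n x'
      calc min (dist (((h.trans (f n)).trans h.symm) x') (g n x')) 1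
          ≤ eta (((h.trans (f n)).trans h.symm) : X → X) (g n) := le_eta _ _ _
        _ ≤ ⨆ m, eta (((h.trans (f m)).trans h.symm) : X → X) (g m) :=
            le_ciSup (f := fun m => eta (((h.trans (f m)).trans h.symm) : X → X) (g m))
              (hbdd _ _) n
        _ ≤ pDist (fun m => (h.trans (f m)).trans h.symm) g := le_max_left _ _
        _ < min δ₂ (1 / 2) := hpd
    have hpd2 : ∀ n x', min (dist (((h.trans (f n)).trans h.symm).symm x')
        ((g n).symm x')) 1 < min δ₂ (1 / 2) := by
      intro n x'
      calc min (dist (((h.trans (f n)).trans h.symm).symm x') ((g n).symm x')) 1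
          ≤ eta (((h.trans (f n)).trans h.symm).symm : X → X) ((g n).symm) := le_eta _ _ _
        _ ≤ ⨆ m, eta (((h.trans (f m)).trans h.symm).symm : X → X) ((g m).symm) :=
            le_ciSup (f := fun m => eta (((h.trans (f m)).trans h.symm).symm : X → X)
              ((g m).symm : X → X)) (hbdd _ _) n
        _ ≤ pDist (fun m => (h.trans (f m)).trans h.symm) g := le_max_right _ _
        _ < min δ₂ (1 / 2) := hpd
    have hGpd : pDist f G < δ := by
      have h1 : (⨆ n, eta ((f n) : X → X) (G n)) ≤ δ / 2 := by
        apply Real.iSup_le _ (by linarith)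
        intro n
        apply Real.iSup_le _ (by linarith)
        intro x'
        refine le_trans (min_le_left _ _) ?_
        have e1 : (f n : X → X) x' = h (((h.trans (f n)).trans h.symm) (h.symm x')) := by
          simp
        have e2 : (G n : X → X) x' = h (g n (h.symm x')) := by simp [hGdef]
        rw [e1, e2]
        exact (key _ _ (hpd1 n (h.symm x'))).le
      have h2 : (⨆ n, eta (((f n).symm : X → X)) ((G n).symm)) ≤ δ / 2 := by
        apply Real.iSup_le _ (by linarith)
        intro n
        apply Real.iSup_le _ (by linarith)
        intro x'
        refine le_trans (min_le_left _ _) ?_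
        have e1 : ((f n).symm : X → X) x'
            = h (((h.trans (f n)).trans h.symm).symm (h.symm x')) := by simp
        have e2 : ((G n).symm : X → X) x' = h ((g n).symm (h.symm x')) := by
          simp [hGdef]
        rw [e1, e2]
        exact (key _ _ (hpd2 n (h.symm x'))).le
      exact lt_of_le_of_lt (max_le h1 h2) (by linarith)
    obtain ⟨y, hy⟩ := hmain G hGbi hGpd (h x) hx
    refine ⟨h.symm y, fun n => ?_⟩
    have e1 : compZ (fun m => (h.trans (f m)).trans h.symm) n (h.symm y)
        = h.symm (compZ f n y) := by
      have := conj_compZ h.symm f n (h.symm y)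
      simpa using this
    have e2 : compZ g n x = h.symm (compZ G n (h x)) := by
      have := conj_compZ h g n (h x)
      simp only [Equiv.symm_apply_apply] at this
      rw [this, Equiv.symm_apply_apply]
    rw [e1, e2]
    exact hε₁' (hy n)
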